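/- Let P be a probability distribution on X ⊆ B_d, let p ≥ 1 be a real, let k ≥ 1, and let x ↦ x̃ be a measurable map on X with x̃ ∈ B_d and κ(x, x̃) ≤ s for all x ∈ X. Then for every k-partition 𝒞 of X, |cost(𝒞) − c̃ost(𝒞)| ≤ p·s, where c̃ost(𝒞) denotes the partition cost computed with x̃ in place of x. Consequently, if ε ∈ (0,1] and s ≤ ε·OPT/(2p), where OPT is the optimal statistical (k,p)-clustering cost of P, then (1+ε)^{−1}·cost(𝒞) ≤ c̃ost(𝒞) ≤ (1+ε)·cost(𝒞) for every k-partition 𝒞 of X. -/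

import Mathlib

open MeasureTheory

/-- `κ(x, F) = min_{f ∈ F} N (x - f)`. -/
noncomputable def setDist {d : ℕ} (N : Seminorm ℝ (Fin d → ℝ))
    (x : Fin d → ℝ) (F : Finset (Fin d → ℝ)) : ℝ :=
  sInf {r | ∃ f ∈ F, r = N (x - f)}

/-- `B_d`: the `κ`-ball of diameter 1 centered at the origin. -/
def ballD {d : ℕ} (N : Seminorm ℝ (Fin d → ℝ)) : Set (Fin d → ℝ) := {x | N x ≤ 1 / 2}

/-- The statistical partition cost of the `k`-partition (labelling) `g`, where each point
`x` is first moved to `T x` and centers range over `B_d`: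
`inf_{u⁽¹⁾,…,u⁽ᵏ⁾ ∈ B_d} E_{x∼P}[κ(T x, u^{(g x)})^p]`. -/
noncomputable def partCostVia {d k : ℕ} (N : Seminorm ℝ (Fin d → ℝ)) (p : ℝ)
    (P : Measure (Fin d → ℝ)) (T : (Fin d → ℝ) → Fin d → ℝ)
    (g : (Fin d → ℝ) → Fin k) : ℝ :=
  ⨅ u : Fin k → (ballD N), ∫ x, (N (T x - (u (g x) : Fin d → ℝ)) : ℝ) ^ p ∂P

/-- The optimal statistical `(k,p)`-clustering cost `OPT`. -/
noncomputable def clusterOPT {d : ℕ} (N : Seminorm ℝ (Fin d → ℝ)) (p : ℝ)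
    (P : Measure (Fin d → ℝ)) (k : ℕ) : ℝ :=
  sInf {r | ∃ F : Finset (Fin d → ℝ), ↑F ⊆ ballD N ∧ F.card = k ∧
    r = ∫ x, setDist N x F ^ p ∂P}

/-! For fixed centers, moving each point by at most `s` inside `B_d` changes each distance
to a center by at most `s`; all these distances lie in `[0, 1]`, where `t ↦ t ^ p` is
`p`-Lipschitz, so each fixed-center cost moves by at most `p * s`, and so does their
infimum over the centers. Every partition cost is at least `OPT` (the centers used, padded to
`k` points, form an admissible center set), so `p * s ≤ ε * OPT / 2` turns the additive bound
into the multiplicative one. -/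

open Set

lemma Seminorm.continuous_of_finiteDimensional {E : Type*} [NormedAddCommGroup E]
    [NormedSpace ℝ E] [FiniteDimensional ℝ E] (N : Seminorm ℝ E) : Continuous N :=
  continuousOn_univ.mp (N.convexOn.continuousOn isOpen_univ)

lemma Real.abs_rpow_sub_rpow_le_of_mem_Icc {p a b : ℝ} (hp : 1 ≤ p) (ha : a ∈ Icc (0 : ℝ) 1)
    (hb : b ∈ Icc (0 : ℝ) 1) : |a ^ p - b ^ p| ≤ p * |a - b| := by
  have hderiv_le : ∀ t ∈ Icc (0 : ℝ) 1, ‖p * t ^ (p - 1)‖ ≤ p := fun t ht => by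
    rw [Real.norm_eq_abs, abs_of_nonneg (by have := Real.rpow_nonneg ht.1 (p - 1); positivity)]
    exact mul_le_of_le_one_right (by linarith) (Real.rpow_le_one ht.1 ht.2 (by linarith))
  simpa [Real.norm_eq_abs] using Convex.norm_image_sub_le_of_norm_hasDerivWithin_le
    (fun t _ => (Real.hasDerivAt_rpow_const (Or.inr hp)).hasDerivWithinAt) hderiv_le
    (convex_Icc 0 1) hb ha

lemma abs_ciInf_sub_ciInf_le {ι : Type*} [Nonempty ι] {f g : ι → ℝ} {c : ℝ}
    (hf : BddBelow (range f)) (hg : BddBelow (range g)) (h : ∀ i, |f i - g i| ≤ c) :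
    |(⨅ i, f i) - ⨅ i, g i| ≤ c := by
  rw [abs_sub_le_iff]
  constructor
  · have : (⨅ i, f i) - c ≤ ⨅ i, g i := le_ciInf fun i => by
      linarith [ciInf_le hf i, (abs_sub_le_iff.mp (h i)).1]
    linarith
  · have : (⨅ i, g i) - c ≤ ⨅ i, f i := le_ciInf fun i => by
      linarith [ciInf_le hg i, (abs_sub_le_iff.mp (h i)).2]
    linarith

lemma inv_one_add_mul_le_and_le_one_add_mul {A B ε : ℝ} (hA : 0 ≤ A) (hε₀ : 0 ≤ ε)
    (hε₁ : ε ≤ 1) (h : |A - B| ≤ ε * A / 2) : (1 + ε)⁻¹ * A ≤ B ∧ B ≤ (1 + ε) * A := by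
  obtain ⟨hlo, hhi⟩ := abs_sub_le_iff.mp h
  refine ⟨?_, by nlinarith⟩
  rw [inv_mul_le_iff₀ (by linarith)]
  nlinarith [mul_nonneg (mul_nonneg hε₀ (sub_nonneg.mpr hε₁)) hA]

section Clustering

variable {d k : ℕ} (N : Seminorm ℝ (Fin d → ℝ)) {p : ℝ} (P : Measure (Fin d → ℝ))

lemma zero_mem_ballD : (0 : Fin d → ℝ) ∈ ballD N := by
  simp [ballD]

instance : Nonempty (ballD N) :=
  ⟨⟨0, zero_mem_ballD N⟩⟩

lemma map_sub_mem_Icc_of_mem_ballD {a b : Fin d → ℝ} (ha : a ∈ ballD N) (hb : b ∈ ballD N) :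
    N (a - b) ∈ Icc (0 : ℝ) 1 := by
  have ha' : N a ≤ 1 / 2 := ha
  have hb' : N b ≤ 1 / 2 := hb
  exact ⟨apply_nonneg _ _, by linarith [map_sub_le_add N a b]⟩

lemma setDist_nonneg (x : Fin d → ℝ) (F : Finset (Fin d → ℝ)) : 0 ≤ setDist N x F :=
  Real.sInf_nonneg <| by rintro _ ⟨f, -, rfl⟩; exact apply_nonneg _ _

lemma setDist_le {x f : Fin d → ℝ} {F : Finset (Fin d → ℝ)} (hf : f ∈ F) :
    setDist N x F ≤ N (x - f) :=
  csInf_le ⟨0, by rintro _ ⟨f, -, rfl⟩; exact apply_nonneg _ _⟩ ⟨f, hf, rfl⟩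

noncomputable def centerCost (p : ℝ) (T : (Fin d → ℝ) → Fin d → ℝ) (g : (Fin d → ℝ) → Fin k)
    (u : Fin k → ballD N) : ℝ :=
  ∫ x, N (T x - (u (g x) : Fin d → ℝ)) ^ p ∂P

lemma partCostVia_eq_iInf_centerCost (T : (Fin d → ℝ) → Fin d → ℝ) (g : (Fin d → ℝ) → Fin k) :
    partCostVia N p P T g = ⨅ u, centerCost N P p T g u :=
  rfl

lemma centerCost_nonneg (T : (Fin d → ℝ) → Fin d → ℝ) (g : (Fin d → ℝ) → Fin k)
    (u : Fin k → ballD N) : 0 ≤ centerCost N P p T g u :=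
  integral_nonneg fun _ => Real.rpow_nonneg (apply_nonneg _ _) _

lemma bddBelow_range_centerCost (T : (Fin d → ℝ) → Fin d → ℝ) (g : (Fin d → ℝ) → Fin k) :
    BddBelow (range (centerCost N P p T g)) :=
  ⟨0, by rintro _ ⟨u, rfl⟩; exact centerCost_nonneg N P T g u⟩

lemma partCostVia_nonneg (T : (Fin d → ℝ) → Fin d → ℝ) (g : (Fin d → ℝ) → Fin k) :
    0 ≤ partCostVia N p P T g := by
  rw [partCostVia_eq_iInf_centerCost]
  exact le_ciInf (centerCost_nonneg N P T g)

lemma integrable_rpow_sub_center [IsFiniteMeasure P] (hp : 0 ≤ p)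
    {T : (Fin d → ℝ) → Fin d → ℝ} (hT : Measurable T) (hTball : ∀ᵐ x ∂P, T x ∈ ballD N)
    {g : (Fin d → ℝ) → Fin k} (hg : Measurable g) (u : Fin k → ballD N) :
    Integrable (fun x => N (T x - (u (g x) : Fin d → ℝ)) ^ p) P := by
  have hmeas : Measurable fun x => N (T x - (u (g x) : Fin d → ℝ)) ^ p :=
    (Real.continuous_rpow_const hp).measurable.comp
      (N.continuous_of_finiteDimensional.measurable.comp
        (hT.sub ((measurable_of_finite fun j => (u j : Fin d → ℝ)).comp hg)))
  refine ⟨hmeas.aestronglyMeasurable, HasFiniteIntegral.of_bounded (C := 1) ?_⟩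
  filter_upwards [hTball] with x hx
  rw [Real.norm_eq_abs, abs_of_nonneg (Real.rpow_nonneg (apply_nonneg _ _) _)]
  exact Real.rpow_le_one (apply_nonneg _ _)
    (map_sub_mem_Icc_of_mem_ballD N hx (u (g x)).2).2 hp

lemma clusterOPT_le_centerCost [IsFiniteMeasure P] (hp : 0 ≤ p) (hX : ∀ᵐ x ∂P, x ∈ ballD N)
    {g : (Fin d → ℝ) → Fin k} (hg : Measurable g) (u : Fin k → ballD N) :
    clusterOPT N p P k ≤ centerCost N P p id g u := by
  set S := {r | ∃ F : Finset (Fin d → ℝ), ↑F ⊆ ballD N ∧ F.card = k ∧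
    r = ∫ x, setDist N x F ^ p ∂P}
  change sInf S ≤ _
  rcases S.eq_empty_or_nonempty with hS | ⟨_, F₀, hF₀ball, hF₀card, -⟩
  · rw [hS, Real.sInf_empty]
    exact centerCost_nonneg N P id g u
  classical
  set U := Finset.univ.image fun j => (u j : Fin d → ℝ)
  obtain ⟨F, hUF, hF, hFcard⟩ := Finset.exists_subsuperset_card_eq Finset.subset_union_left
    (Finset.card_image_le.trans (by simp) : U.card ≤ k)
    (hF₀card ▸ Finset.card_le_card Finset.subset_union_right : k ≤ (U ∪ F₀).card)
  have hFball : ↑F ⊆ ballD N := fun y hy => by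
    rcases Finset.mem_union.mp (hF hy) with hyU | hyF₀
    · obtain ⟨j, -, rfl⟩ := Finset.mem_image.mp hyU
      exact (u j).2
    · exact hF₀ball hyF₀
  have hSbdd : BddBelow S := ⟨0, by
    rintro _ ⟨F, -, -, rfl⟩
    exact integral_nonneg fun x => Real.rpow_nonneg (setDist_nonneg N x F) _⟩
  calc sInf S ≤ ∫ x, setDist N x F ^ p ∂P := csInf_le hSbdd ⟨F, hFball, hFcard, rfl⟩
    _ ≤ centerCost N P p id g u :=
      integral_mono_of_nonneg (ae_of_all _ fun x => Real.rpow_nonneg (setDist_nonneg N x F) _)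
        (integrable_rpow_sub_center N P hp measurable_id hX hg u)
        (ae_of_all _ fun x => Real.rpow_le_rpow (setDist_nonneg N x F)
          (setDist_le N (hUF (by simp))) hp)

lemma clusterOPT_le_partCostVia [IsFiniteMeasure P] (hp : 0 ≤ p) (hX : ∀ᵐ x ∂P, x ∈ ballD N)
    {g : (Fin d → ℝ) → Fin k} (hg : Measurable g) :
    clusterOPT N p P k ≤ partCostVia N p P id g := by
  rw [partCostVia_eq_iInf_centerCost]
  exact le_ciInf (clusterOPT_le_centerCost N P hp hX hg)

variable [IsProbabilityMeasure P] {T : (Fin d → ℝ) → Fin d → ℝ} {s : ℝ}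

lemma abs_centerCost_id_sub_le (hp : 1 ≤ p) (hT : Measurable T)
    (hball : ∀ᵐ x ∂P, x ∈ ballD N ∧ T x ∈ ballD N) (hTs : ∀ᵐ x ∂P, N (x - T x) ≤ s)
    {g : (Fin d → ℝ) → Fin k} (hg : Measurable g) (u : Fin k → ballD N) :
    |centerCost N P p id g u - centerCost N P p T g u| ≤ p * s := by
  have hp₀ : 0 ≤ p := by linarith
  have hpointwise : ∀ᵐ x ∂P, ‖N (x - (u (g x) : Fin d → ℝ)) ^ p
      - N (T x - (u (g x) : Fin d → ℝ)) ^ p‖ ≤ p * s := by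
    filter_upwards [hball, hTs] with x ⟨hx, hTx⟩ hxs
    have hmove : |N (x - (u (g x) : Fin d → ℝ)) - N (T x - (u (g x) : Fin d → ℝ))| ≤ s := by
      have := abs_sub_map_le_sub N (x - u (g x)) (T x - u (g x))
      rw [sub_sub_sub_cancel_right] at this
      exact this.trans hxs
    exact (Real.abs_rpow_sub_rpow_le_of_mem_Icc hp (map_sub_mem_Icc_of_mem_ballD N hx (u (g x)).2)
      (map_sub_mem_Icc_of_mem_ballD N hTx (u (g x)).2)).trans
      (mul_le_mul_of_nonneg_left hmove hp₀)
  rw [centerCost, centerCost, ← integral_sub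
    (integrable_rpow_sub_center N P hp₀ measurable_id (hball.mono fun _ h => h.1) hg u)
    (integrable_rpow_sub_center N P hp₀ hT (hball.mono fun _ h => h.2) hg u)]
  simpa using norm_integral_le_of_norm_le_const hpointwise

lemma abs_partCostVia_id_sub_le (hp : 1 ≤ p) (hT : Measurable T)
    (hball : ∀ᵐ x ∂P, x ∈ ballD N ∧ T x ∈ ballD N) (hTs : ∀ᵐ x ∂P, N (x - T x) ≤ s)
    {g : (Fin d → ℝ) → Fin k} (hg : Measurable g) :
    |partCostVia N p P id g - partCostVia N p P T g| ≤ p * s := by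
  simp only [partCostVia_eq_iInf_centerCost]
  exact abs_ciInf_sub_ciInf_le (bddBelow_range_centerCost N P id g)
    (bddBelow_range_centerCost N P T g) (abs_centerCost_id_sub_le N P hp hT hball hTs hg)

end Clustering

theorem discretization_preserves_partition_costs_general {d k : ℕ}
    (N : Seminorm ℝ (Fin d → ℝ))
    (p : ℝ) (hp : 1 ≤ p)
    (P : Measure (Fin d → ℝ)) [IsProbabilityMeasure P]
    (X : Set (Fin d → ℝ)) (hX : X ⊆ ballD N) (hPX : ∀ᵐ x ∂P, x ∈ X)
    (T : (Fin d → ℝ) → Fin d → ℝ) (hTmeas : Measurable T)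
    (hTball : ∀ x ∈ X, T x ∈ ballD N)
    (s : ℝ) (hTs : ∀ x ∈ X, (N (x - T x) : ℝ) ≤ s) :
    (∀ g : (Fin d → ℝ) → Fin k, Measurable g →
      |partCostVia N p P id g - partCostVia N p P T g| ≤ p * s) ∧
    (∀ ε : ℝ, 0 < ε → ε ≤ 1 → s ≤ ε * clusterOPT N p P k / (2 * p) →
      ∀ g : (Fin d → ℝ) → Fin k, Measurable g →
        (1 + ε)⁻¹ * partCostVia N p P id g ≤ partCostVia N p P T g ∧
        partCostVia N p P T g ≤ (1 + ε) * partCostVia N p P id g) := by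
  have hp₀ : 0 < p := by linarith
  have hball : ∀ᵐ x ∂P, x ∈ ballD N ∧ T x ∈ ballD N :=
    hPX.mono fun x hx => ⟨hX hx, hTball x hx⟩
  have additive : ∀ g : (Fin d → ℝ) → Fin k, Measurable g →
      |partCostVia N p P id g - partCostVia N p P T g| ≤ p * s :=
    fun g hg => abs_partCostVia_id_sub_le N P hp hTmeas hball (hPX.mono hTs) hg
  refine ⟨additive, fun ε hε₀ hε₁ hs g hg => ?_⟩
  refine inv_one_add_mul_le_and_le_one_add_mul (partCostVia_nonneg N P id g) hε₀.le hε₁ ?_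
  calc |partCostVia N p P id g - partCostVia N p P T g|
      ≤ p * s := additive g hg
    _ ≤ p * (ε * clusterOPT N p P k / (2 * p)) := mul_le_mul_of_nonneg_left hs hp₀.le
    _ = ε * clusterOPT N p P k / 2 := by field_simp
    _ ≤ ε * partCostVia N p P id g / 2 := by
      gcongr
      exact clusterOPT_le_partCostVia N P hp₀.le (hball.mono fun _ h => h.1) hg

/-- Discretization preserves partition costs: if `κ(x, x̃) ≤ s` on `X`, then every
`k`-partition cost changes by at most `p·s`; consequently, if `s ≤ ε·OPT/(2p)`, partition
costs are preserved up to `1 ± ε` multiplicative factors. -/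
theorem discretization_preserves_partition_costs {d k : ℕ} (hk : 1 ≤ k)
    (N : Seminorm ℝ (Fin d → ℝ)) (hNdef : ∀ x, N x = 0 → x = 0)
    (p : ℝ) (hp : 1 ≤ p)
    (P : Measure (Fin d → ℝ)) [IsProbabilityMeasure P]
    (X : Set (Fin d → ℝ)) (hX : X ⊆ ballD N) (hPX : ∀ᵐ x ∂P, x ∈ X)
    (T : (Fin d → ℝ) → Fin d → ℝ) (hTmeas : Measurable T)
    (hTball : ∀ x ∈ X, T x ∈ ballD N)
    (s : ℝ) (hTs : ∀ x ∈ X, (N (x - T x) : ℝ) ≤ s) :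
    (∀ g : (Fin d → ℝ) → Fin k, Measurable g →
      |partCostVia N p P id g - partCostVia N p P T g| ≤ p * s) ∧
    (∀ ε : ℝ, 0 < ε → ε ≤ 1 → s ≤ ε * clusterOPT N p P k / (2 * p) →
      ∀ g : (Fin d → ℝ) → Fin k, Measurable g →
        (1 + ε)⁻¹ * partCostVia N p P id g ≤ partCostVia N p P T g ∧
        partCostVia N p P T g ≤ (1 + ε) * partCostVia N p P id g) :=
  discretization_preserves_partition_costs_general N p hp P X hX hPX T hTmeas hTball s hTs
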